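/- arXiv:1112.5509 — 2 statements merged into one kernel-verified Lean document; each statement's English description precedes it below -/
import Mathlib

section
/- Let a : Fin m → Fin n → ℂ, and let 2 ≤ s ≤ m, 2 ≤ t ≤ n. For subsets S ⊆ Fin m with |S| = s and T ⊆ Fin n with |T| = t, define D(S,T) = Σ_{i<k, i,k∈S} Σ_{j<l, j,l∈T} |a_{ij}a_{kl} - a_{il}a_{kj}|². Then Σ_{S,T} D(S,T) = C(m-2,s-2) * C(n-2,t-2) * Σ_{i<k} Σ_{j<l} |a_{ij}a_{kl} - a_{il}a_{kj}|², where the outer sum is over all such pairs (S,T). -/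
/-!
The minor with rows `i < k` and columns `j < l` contributes to `D(S,T)` exactly when
`{i, k} ⊆ S` and `{j, l} ⊆ T`. Exchanging the order of summation, each minor is therefore
counted once for every `s`-set containing a fixed pair of rows and every `t`-set containing
a fixed pair of columns, i.e. `C(m-2,s-2) * C(n-2,t-2)` times.
-/

open Finset

section
variable {α : Type*} [Fintype α] [DecidableEq α]

theorem card_filter_card_eq_and_subset {B : Finset α} {s : ℕ} (hB : #B ≤ s) :
    #(univ.filter fun S : Finset α => #S = s ∧ B ⊆ S) =
      (Fintype.card α - #B).choose (s - #B) := by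
  rw [← card_compl, ← card_powersetCard]
  refine card_nbij' (· \ B) (· ∪ B) ?_ ?_ ?_ ?_
  all_goals simp only [Set.MapsTo, Set.LeftInvOn, mem_coe, mem_filter, mem_univ, true_and,
    mem_powersetCard, and_imp]
  · intro S hS hBS
    exact ⟨by simp [sdiff_eq_inter_compl], by rw [card_sdiff_of_subset hBS, hS]⟩
  · intro A hA hAs
    rw [card_union_of_disjoint (disjoint_of_subset_left hA disjoint_compl_left), hAs]
    exact ⟨by omega, subset_union_right⟩
  · intro S _ hBS
    exact sdiff_union_of_subset hBS
  · intro A hA _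
    exact union_sdiff_cancel_right (disjoint_of_subset_left hA disjoint_compl_left)

theorem card_filter_card_eq_and_mem_and_mem {s : ℕ} (hs : 2 ≤ s) {i k : α} (hik : i ≠ k) :
    #(univ.filter fun S : Finset α => #S = s ∧ i ∈ S ∧ k ∈ S) =
      (Fintype.card α - 2).choose (s - 2) := by
  have hcard : #{i, k} = 2 := card_pair hik
  simpa only [hcard, insert_subset_iff, singleton_subset_iff] using
    card_filter_card_eq_and_subset (B := {i, k}) (hcard.le.trans hs)

theorem sum_card_eq_sum_ite_mem_and_mem {M : Type*} [AddCommMonoid M] {s : ℕ} (hs : 2 ≤ s)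
    (f : α → α → M) (hf : ∀ i, f i i = 0) :
    ∑ S ∈ univ.filter (fun S : Finset α => #S = s), ∑ i, ∑ k,
        (if i ∈ S ∧ k ∈ S then f i k else 0) =
      (Fintype.card α - 2).choose (s - 2) • ∑ i, ∑ k, f i k := by
  rw [sum_comm, smul_sum]
  refine sum_congr rfl fun i _ => ?_
  rw [sum_comm, smul_sum]
  refine sum_congr rfl fun k _ => ?_
  rw [← sum_filter, filter_filter, sum_const]
  obtain rfl | hik := eq_or_ne i k
  · simp [hf]
  · rw [card_filter_card_eq_and_mem_and_mem hs hik]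

theorem sum_card_eq_sum_sum_ite_mem_and_mem {ι M : Type*} [Fintype ι] [AddCommMonoid M]
    {s : ℕ} (hs : 2 ≤ s) (f : ι → ι → α → α → M) (hf : ∀ x y i, f x y i i = 0) :
    ∑ S ∈ univ.filter (fun S : Finset α => #S = s), ∑ x, ∑ y, ∑ i, ∑ k,
        (if i ∈ S ∧ k ∈ S then f x y i k else 0) =
      (Fintype.card α - 2).choose (s - 2) • ∑ x, ∑ y, ∑ i, ∑ k, f x y i k := by
  rw [sum_comm, smul_sum]
  refine sum_congr rfl fun x _ => ?_
  rw [sum_comm, smul_sum]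
  exact sum_congr rfl fun y _ => sum_card_eq_sum_ite_mem_and_mem hs (f x y) (hf x y)

end

theorem stmt6_general (m n s t : ℕ) (hs2 : 2 ≤ s) (ht2 : 2 ≤ t)
    (a : Fin m → Fin n → ℂ) :
    ∑ S ∈ Finset.univ.filter (fun S : Finset (Fin m) => S.card = s),
      ∑ T ∈ Finset.univ.filter (fun T : Finset (Fin n) => T.card = t),
        (∑ i, ∑ k, ∑ j, ∑ l,
          if i ∈ S ∧ k ∈ S ∧ j ∈ T ∧ l ∈ T ∧ i < k ∧ j < l then
            ‖a i j * a k l - a i l * a k j‖ ^ 2 else 0) =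
    ((Nat.choose (m - 2) (s - 2) * Nat.choose (n - 2) (t - 2) : ℕ) : ℝ) *
      ∑ i, ∑ k, ∑ j, ∑ l,
        if i < k ∧ j < l then ‖a i j * a k l - a i l * a k j‖ ^ 2 else 0 := by
  set g : Fin m → Fin m → Fin n → Fin n → ℝ := fun i k j l =>
    if i < k ∧ j < l then ‖a i j * a k l - a i l * a k j‖ ^ 2 else 0
  have hsplit : ∀ (S : Finset (Fin m)) (T : Finset (Fin n)) i k j l,
      (if i ∈ S ∧ k ∈ S ∧ j ∈ T ∧ l ∈ T ∧ i < k ∧ j < l then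
        ‖a i j * a k l - a i l * a k j‖ ^ 2 else 0) =
      if j ∈ T ∧ l ∈ T then (if i ∈ S ∧ k ∈ S then g i k j l else 0) else 0 := by
    intro S T i k j l
    simp only [g]; split_ifs <;> tauto
  have hcols : ∀ S : Finset (Fin m), _ := fun S => sum_card_eq_sum_sum_ite_mem_and_mem ht2
    (fun i k j l => if i ∈ S ∧ k ∈ S then g i k j l else 0) (fun i k j => by simp [g])
  simp_rw [hsplit, hcols, sum_ite_irrel, sum_const_zero, ← smul_sum]
  rw [sum_card_eq_sum_ite_mem_and_mem hs2 _ (fun i => by simp [g]), smul_smul,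
    Fintype.card_fin, Fintype.card_fin, nsmul_eq_mul, mul_comm ((n - 2).choose _)]

/-- Summing the squared 2×2 minors over all `s⊗t` subspaces counts every minor of the
full matrix exactly `C(m-2,s-2)·C(n-2,t-2)` times. -/
theorem stmt6 (m n s t : ℕ) (hs2 : 2 ≤ s) (hsm : s ≤ m) (ht2 : 2 ≤ t) (htn : t ≤ n)
    (a : Fin m → Fin n → ℂ) :
    ∑ S ∈ Finset.univ.filter (fun S : Finset (Fin m) => S.card = s),
      ∑ T ∈ Finset.univ.filter (fun T : Finset (Fin n) => T.card = t),
        (∑ i, ∑ k, ∑ j, ∑ l,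
          if i ∈ S ∧ k ∈ S ∧ j ∈ T ∧ l ∈ T ∧ i < k ∧ j < l then
            ‖a i j * a k l - a i l * a k j‖ ^ 2 else 0) =
    ((Nat.choose (m - 2) (s - 2) * Nat.choose (n - 2) (t - 2) : ℕ) : ℝ) *
      ∑ i, ∑ k, ∑ j, ∑ l,
        if i < k ∧ j < l then ‖a i j * a k l - a i l * a k j‖ ^ 2 else 0 :=
  stmt6_general m n s t hs2 ht2 a
end

section
/- Let ρ and σ be bipartite states. If every 2⊗2 projected block ρ_{S⊗T} (with |S| = |T| = 2) of ρ has PPT partial transpose, and similarly all 2⊗2 projected blocks of σ are PPT, then every 2⊗2 projected block of ρ ⊗ σ (with respect to the combined bipartition) is PPT. -/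
open ComplexOrder

/-- Partial transpose on the first (A) factor of a bipartite matrix. -/
def ptA {α β : Type*} (M : Matrix (α × β) (α × β) ℂ) : Matrix (α × β) (α × β) ℂ :=
  Matrix.of fun p q => M (q.1, p.2) (p.1, q.2)

/-- Tensor product of bipartite operators, regarded as a bipartite operator on
`(A₁A₂) ⊗ (B₁B₂)`. -/
def tensAB {α₁ β₁ α₂ β₂ : Type*} (C : Matrix (α₁ × β₁) (α₁ × β₁) ℂ)
    (D : Matrix (α₂ × β₂) (α₂ × β₂) ℂ) :
    Matrix ((α₁ × α₂) × (β₁ × β₂)) ((α₁ × α₂) × (β₁ × β₂)) ℂ :=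
  Matrix.of fun p q =>
    C (p.1.1, p.2.1) (q.1.1, q.2.1) * D (p.1.2, p.2.2) (q.1.2, q.2.2)

/-- The `2⊗2` projected block of a bipartite matrix on `S × T`. -/
noncomputable def block22 {α β : Type*} [Fintype α] [Fintype β] [DecidableEq α] [DecidableEq β]
    (M : Matrix (α × β) (α × β) ℂ) (S : Finset α) (T : Finset β) :
    Matrix (α × β) (α × β) ℂ :=
  let P : Matrix (α × β) (α × β) ℂ :=
    Matrix.of fun p q => if p = q ∧ p.1 ∈ S ∧ p.2 ∈ T then 1 else 0
  P * M * P

namespace Stmt17Aux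

open Matrix

/-- The diagonal projector used in `block22`. -/
noncomputable def proj {α β : Type*} [DecidableEq α] [DecidableEq β]
    (S : Finset α) (T : Finset β) : Matrix (α × β) (α × β) ℂ :=
  Matrix.of fun p q => if p = q ∧ p.1 ∈ S ∧ p.2 ∈ T then 1 else 0

/-- The diagonal entries of `proj`. -/
noncomputable def dd {α β : Type*} [DecidableEq α] [DecidableEq β]
    (S : Finset α) (T : Finset β) (p : α × β) : ℂ :=
  if p.1 ∈ S ∧ p.2 ∈ T then 1 else 0

variable {α β : Type*} [DecidableEq α] [DecidableEq β]

lemma proj_eq (S : Finset α) (T : Finset β) :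
    proj S T = Matrix.diagonal (dd S T) := by
  ext p q
  by_cases h : p = q
  · subst h; simp [proj, dd, Matrix.diagonal_apply]
  · simp [proj, dd, Matrix.diagonal_apply, h]

lemma dd_eq (S : Finset α) (T : Finset β) (p : α × β) :
    dd S T p = (if p.1 ∈ S then (1:ℂ) else 0) * (if p.2 ∈ T then (1:ℂ) else 0) := by
  unfold dd; split_ifs with h h1 h2 <;> simp_all

lemma conj_apply [Fintype α] [Fintype β] (M : Matrix (α × β) (α × β) ℂ)
    (S : Finset α) (T : Finset β) (p q : α × β) :
    (proj S T * M * proj S T) p q = dd S T p * M p q * dd S T q := by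
  rw [proj_eq]
  simp [Matrix.mul_diagonal, Matrix.diagonal_mul]

lemma block22_eq [Fintype α] [Fintype β] (M : Matrix (α × β) (α × β) ℂ)
    (S : Finset α) (T : Finset β) :
    block22 M S T = proj S T * M * proj S T := rfl

lemma block22_apply [Fintype α] [Fintype β] (M : Matrix (α × β) (α × β) ℂ)
    (S : Finset α) (T : Finset β) (p q : α × β) :
    block22 M S T p q = dd S T p * M p q * dd S T q := by
  rw [block22_eq, conj_apply]

lemma proj_conjTranspose (S : Finset α) (T : Finset β) :
    (proj S T)ᴴ = proj S T := by
  ext p q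
  by_cases h : p = q
  · subst h; simp [proj, Matrix.conjTranspose_apply, apply_ite (star : ℂ → ℂ)]
  · have h' : ¬ q = p := fun h' => h h'.symm
    simp [proj, Matrix.conjTranspose_apply, h, h']

lemma conj_posSemidef [Fintype α] [Fintype β] {M : Matrix (α × β) (α × β) ℂ}
    (hM : M.PosSemidef) (S : Finset α) (T : Finset β) :
    (proj S T * M * proj S T).PosSemidef := by
  have := hM.mul_mul_conjTranspose_same (proj S T)
  rwa [proj_conjTranspose] at this

lemma block22_posSemidef [Fintype α] [Fintype β] {M : Matrix (α × β) (α × β) ℂ}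
    (hM : M.PosSemidef) (S : Finset α) (T : Finset β) :
    (block22 M S T).PosSemidef := by
  rw [block22_eq]; exact conj_posSemidef hM S T

/-- `ptA` commutes with conjugation by the diagonal projector. -/
lemma ptA_conj [Fintype α] [Fintype β] (M : Matrix (α × β) (α × β) ℂ)
    (S : Finset α) (T : Finset β) :
    ptA (proj S T * M * proj S T) = proj S T * ptA M * proj S T := by
  ext p q
  show (proj S T * M * proj S T) (q.1, p.2) (p.1, q.2)
      = (proj S T * ptA M * proj S T) p q
  rw [conj_apply, conj_apply]
  show dd S T (q.1, p.2) * M (q.1, p.2) (p.1, q.2) * dd S T (p.1, q.2)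
      = dd S T p * M (q.1, p.2) (p.1, q.2) * dd S T q
  simp only [dd_eq]
  ring

lemma ptA_block22 [Fintype α] [Fintype β] (M : Matrix (α × β) (α × β) ℂ)
    (S : Finset α) (T : Finset β) :
    ptA (block22 M S T) = block22 (ptA M) S T := by
  rw [block22_eq, block22_eq, ptA_conj]

lemma ptA_tensAB {α₁ β₁ α₂ β₂ : Type*} (C : Matrix (α₁ × β₁) (α₁ × β₁) ℂ)
    (D : Matrix (α₂ × β₂) (α₂ × β₂) ℂ) :
    ptA (tensAB C D) = tensAB (ptA C) (ptA D) := rfl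

/-- `tensAB` is a reindexed Kronecker product. -/
lemma tensAB_eq {α₁ β₁ α₂ β₂ : Type*} (C : Matrix (α₁ × β₁) (α₁ × β₁) ℂ)
    (D : Matrix (α₂ × β₂) (α₂ × β₂) ℂ) :
    tensAB C D = (Matrix.kroneckerMap (· * ·) C D).submatrix
      (Equiv.prodProdProdComm α₁ α₂ β₁ β₂) (Equiv.prodProdProdComm α₁ α₂ β₁ β₂) := by
  ext ⟨⟨a, b⟩, ⟨c, e⟩⟩ ⟨⟨a', b'⟩, ⟨c', e'⟩⟩
  rfl

lemma tensAB_mul {α₁ β₁ α₂ β₂ : Type*} [Fintype α₁] [Fintype β₁] [Fintype α₂] [Fintype β₂]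
    (A B : Matrix (α₁ × β₁) (α₁ × β₁) ℂ) (A' B' : Matrix (α₂ × β₂) (α₂ × β₂) ℂ) :
    tensAB A A' * tensAB B B' = tensAB (A * B) (A' * B') := by
  simp only [tensAB_eq]
  rw [Matrix.submatrix_mul_equiv, Matrix.mul_kronecker_mul]

lemma tensAB_conjTranspose {α₁ β₁ α₂ β₂ : Type*} (C : Matrix (α₁ × β₁) (α₁ × β₁) ℂ)
    (D : Matrix (α₂ × β₂) (α₂ × β₂) ℂ) :
    (tensAB C D)ᴴ = tensAB Cᴴ Dᴴ := by
  ext p q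
  simp [tensAB, Matrix.conjTranspose_apply]

lemma tensAB_posSemidef {α₁ β₁ α₂ β₂ : Type*} [Fintype α₁] [Fintype β₁] [Fintype α₂] [Fintype β₂]
    [DecidableEq α₁] [DecidableEq β₁] [DecidableEq α₂] [DecidableEq β₂]
    {C : Matrix (α₁ × β₁) (α₁ × β₁) ℂ} {D : Matrix (α₂ × β₂) (α₂ × β₂) ℂ}
    (hC : C.PosSemidef) (hD : D.PosSemidef) : (tensAB C D).PosSemidef := by
  rw [tensAB_eq]
  exact (hC.kronecker hD).submatrix _

/-- All (at most) `2⊗2` blocks of a PPT-blocks state have PSD partial transpose. -/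
lemma ptA_block22_psd {m n : ℕ} {ρ : Matrix (Fin m × Fin n) (Fin m × Fin n) ℂ}
    (hρ : ρ.PosSemidef)
    (hblk : ∀ (S : Finset (Fin m)) (T : Finset (Fin n)), S.card = 2 → T.card = 2 →
      (ptA (block22 ρ S T)).PosSemidef)
    (S : Finset (Fin m)) (T : Finset (Fin n)) (hS : S.card ≤ 2) (hT : T.card ≤ 2) :
    (ptA (block22 ρ S T)).PosSemidef := by
  by_cases hS2 : S.card = 2
  · by_cases hT2 : T.card = 2
    · exact hblk S T hS2 hT2
    · -- T has at most one element: the partial transpose is the transpose of the block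
      have hT1 : T.card ≤ 1 := by omega
      have key : ptA (block22 ρ S T) = (block22 ρ S T)ᵀ := by
        ext ⟨p1, p2⟩ ⟨q1, q2⟩
        rw [ptA_block22]
        simp only [block22_apply, Matrix.transpose_apply]
        by_cases hp : p1 ∈ S ∧ p2 ∈ T
        · by_cases hq : q1 ∈ S ∧ q2 ∈ T
          · have h2 : p2 = q2 := Finset.card_le_one.mp hT1 _ hp.2 _ hq.2
            simp only [dd, hp, hq, if_pos, and_self, if_true, mul_one, one_mul]
            show ρ (q1, p2) (p1, q2) = ρ (q1, q2) (p1, p2)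
            rw [h2]
          · simp [dd, hq]
        · simp [dd, hp]
      rw [key]
      exact (block22_posSemidef hρ S T).transpose
  · -- S has at most one element: the partial transpose equals the block itself
    have hS1 : S.card ≤ 1 := by omega
    have key : ptA (block22 ρ S T) = block22 ρ S T := by
      ext ⟨p1, p2⟩ ⟨q1, q2⟩
      rw [ptA_block22]
      simp only [block22_apply]
      by_cases hp : p1 ∈ S ∧ p2 ∈ T
      · by_cases hq : q1 ∈ S ∧ q2 ∈ T
        · have h1 : q1 = p1 := Finset.card_le_one.mp hS1 _ hq.1 _ hp.1
          simp only [dd, hp, hq, if_pos, and_self, if_true, mul_one, one_mul]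
          show ρ (q1, p2) (p1, q2) = ρ (p1, p2) (q1, q2)
          rw [h1]
        · simp [dd, hq]
      · simp [dd, hp]
    rw [key]
    exact block22_posSemidef hρ S T

end Stmt17Aux

open Stmt17Aux in
/-- If all `2⊗2` projected blocks of `ρ` and of `σ` are PPT, then all `2⊗2`
projected blocks of `ρ ⊗ σ` (with respect to the combined bipartition) are PPT. -/
theorem stmt17 (m₁ n₁ m₂ n₂ : ℕ)
    (ρ : Matrix (Fin m₁ × Fin n₁) (Fin m₁ × Fin n₁) ℂ)
    (σ : Matrix (Fin m₂ × Fin n₂) (Fin m₂ × Fin n₂) ℂ)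
    (hρ : ρ.PosSemidef) (hσ : σ.PosSemidef)
    (hρblk : ∀ (S : Finset (Fin m₁)) (T : Finset (Fin n₁)), S.card = 2 → T.card = 2 →
      (ptA (block22 ρ S T)).PosSemidef)
    (hσblk : ∀ (S : Finset (Fin m₂)) (T : Finset (Fin n₂)), S.card = 2 → T.card = 2 →
      (ptA (block22 σ S T)).PosSemidef) :
    ∀ (S : Finset (Fin m₁ × Fin m₂)) (T : Finset (Fin n₁ × Fin n₂)),
      S.card = 2 → T.card = 2 →
      (ptA (block22 (tensAB ρ σ) S T)).PosSemidef := by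
  intro S T hS hT
  set S₁ : Finset (Fin m₁) := S.image Prod.fst with hS₁def
  set S₂ : Finset (Fin m₂) := S.image Prod.snd with hS₂def
  set T₁ : Finset (Fin n₁) := T.image Prod.fst with hT₁def
  set T₂ : Finset (Fin n₂) := T.image Prod.snd with hT₂def
  set R := tensAB (block22 ρ S₁ T₁) (block22 σ S₂ T₂) with hRdef
  -- Key decomposition: the block of the tensor product factors through blocks of the factors.
  have key : block22 (tensAB ρ σ) S T = proj S T * R * proj S T := by
    ext p q
    rw [block22_apply, conj_apply]
    by_cases hp : p.1 ∈ S ∧ p.2 ∈ T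
    · by_cases hq : q.1 ∈ S ∧ q.2 ∈ T
      · have hp11 : p.1.1 ∈ S₁ := Finset.mem_image_of_mem Prod.fst hp.1
        have hp12 : p.1.2 ∈ S₂ := Finset.mem_image_of_mem Prod.snd hp.1
        have hp21 : p.2.1 ∈ T₁ := Finset.mem_image_of_mem Prod.fst hp.2
        have hp22 : p.2.2 ∈ T₂ := Finset.mem_image_of_mem Prod.snd hp.2
        have hq11 : q.1.1 ∈ S₁ := Finset.mem_image_of_mem Prod.fst hq.1
        have hq12 : q.1.2 ∈ S₂ := Finset.mem_image_of_mem Prod.snd hq.1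
        have hq21 : q.2.1 ∈ T₁ := Finset.mem_image_of_mem Prod.fst hq.2
        have hq22 : q.2.2 ∈ T₂ := Finset.mem_image_of_mem Prod.snd hq.2
        have hR : R p q = (tensAB ρ σ) p q := by
          show block22 ρ S₁ T₁ (p.1.1, p.2.1) (q.1.1, q.2.1)
              * block22 σ S₂ T₂ (p.1.2, p.2.2) (q.1.2, q.2.2) = _
          rw [block22_apply, block22_apply]
          simp only [dd, hp11, hp12, hp21, hp22, hq11, hq12, hq21, hq22, and_self, if_true,
            mul_one, one_mul]
          rfl
        rw [hR]
      · simp [dd, hq]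
    · simp [dd, hp]
  rw [block22_eq, ← block22_eq, key, ptA_conj]
  have hRpt : ptA R = tensAB (ptA (block22 ρ S₁ T₁)) (ptA (block22 σ S₂ T₂)) := ptA_tensAB _ _
  have h1 : (ptA (block22 ρ S₁ T₁)).PosSemidef :=
    ptA_block22_psd hρ hρblk S₁ T₁ (le_trans (Finset.card_image_le) (le_of_eq hS))
      (le_trans (Finset.card_image_le) (le_of_eq hT))
  have h2 : (ptA (block22 σ S₂ T₂)).PosSemidef :=
    ptA_block22_psd hσ hσblk S₂ T₂ (le_trans (Finset.card_image_le) (le_of_eq hS))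
      (le_trans (Finset.card_image_le) (le_of_eq hT))
  have hpsd : (ptA R).PosSemidef := by
    rw [hRpt]; exact tensAB_posSemidef h1 h2
  exact conj_posSemidef hpsd S T
end
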